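/- (Weighted POD error identity) Let Y be a real inner product space and G : X → Y a linear map. Then for every 0 ≤ l ≤ d_p, (1/M) Σ_{j=1}^M ‖G u_j − Σ_{k=1}^l ⟨u_j, ψ_k⟩ G ψ_k‖² = Σ_{k=l+1}^{d_p} λ_k ‖G ψ_k‖². -/

import Mathlib

/-!
Put `w_k = Σ_i v_k^i u_i`, so that `ψ_k = (√M √λ_k)⁻¹ w_k`. The eigenvalue equation gives
`⟪u_j, w_k⟫ = M λ_k v_k^j` and `‖w_k‖² = M λ_k`, hence `⟪u_j, ψ_k⟫ ψ_k = v_k^j w_k` and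
`w_k = √M √λ_k ψ_k` for every `k`: when `λ_k = 0` both sides vanish, as `w_k = 0` and
`ψ_k = 0⁻¹ • w_k = 0`. The `v_k` form an orthogonal matrix, so its columns are orthonormal too and
`u_j = Σ_k v_k^j w_k`; the truncation error of `G u_j` is then `Σ_{k ≥ l} v_k^j G w_k`. Summing its
squared norm over `j` and using orthonormality of the `v_k` once more leaves
`Σ_{k ≥ l} ‖G w_k‖² = M Σ_{k ≥ l} λ_k ‖G ψ_k‖²`.
-/

open scoped RealInnerProductSpace Matrix
open Finset

section Orthonormal

variable {ι : Type*} [Fintype ι] [DecidableEq ι]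

theorem orthonormal_cols_of_orthonormal_rows {R : Type*} [CommRing R] {v : ι → ι → R}
    (hv : ∀ k l, ∑ j, v k j * v l j = if k = l then 1 else 0) (i i' : ι) :
    ∑ k, v k i * v k i' = if i = i' then 1 else 0 := by
  have hrows : Matrix.of v * (Matrix.of v)ᵀ = 1 := by
    ext k l
    simp [Matrix.mul_apply, Matrix.one_apply, hv k l]
  have hcols := congrFun₂ (mul_eq_one_comm.mp hrows : (Matrix.of v)ᵀ * Matrix.of v = 1) i i'
  simpa [Matrix.mul_apply, Matrix.one_apply] using hcols

theorem sum_smul_sum_smul_eq_self {R E : Type*} [CommRing R] [AddCommGroup E] [Module R E]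
    {v : ι → ι → R} (hv : ∀ k l, ∑ j, v k j * v l j = if k = l then 1 else 0) (u : ι → E)
    (j : ι) :
    ∑ k, v k j • ∑ i, v k i • u i = u j := by
  simp_rw [smul_sum, smul_smul]
  rw [sum_comm]
  simp_rw [← sum_smul, orthonormal_cols_of_orthonormal_rows hv, ite_smul, one_smul, zero_smul,
    sum_ite_eq, if_pos (mem_univ j)]

theorem sum_norm_sq_sum_smul_eq_sum_norm_sq {E : Type*} [NormedAddCommGroup E]
    [InnerProductSpace ℝ E] {v : ι → ι → ℝ}
    (hv : ∀ k l, ∑ j, v k j * v l j = if k = l then 1 else 0) (s : Finset ι) (z : ι → E) :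
    ∑ j, ‖∑ k ∈ s, v k j • z k‖ ^ 2 = ∑ k ∈ s, ‖z k‖ ^ 2 := by
  calc ∑ j, ‖∑ k ∈ s, v k j • z k‖ ^ 2
      = ∑ j, ∑ k ∈ s, ∑ k' ∈ s, v k j * v k' j * ⟪z k, z k'⟫ := by
        simp_rw [← real_inner_self_eq_norm_sq, sum_inner, inner_sum, real_inner_smul_left,
          real_inner_smul_right, mul_assoc]
    _ = ∑ k ∈ s, ∑ k' ∈ s, (∑ j, v k j * v k' j) * ⟪z k, z k'⟫ := by
        rw [sum_comm]
        refine sum_congr rfl fun k _ => ?_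
        rw [sum_comm]
        simp_rw [sum_mul]
    _ = ∑ k ∈ s, ‖z k‖ ^ 2 := by
        simp_rw [hv, ite_mul, one_mul, zero_mul, sum_ite_eq]
        exact sum_congr rfl fun k hk => by rw [if_pos hk, real_inner_self_eq_norm_sq]

end Orthonormal

theorem sum_filter_not_lt_eq_sum_filter_of_eq_zero {β : Type*} [AddCommMonoid β] {n : ℕ}
    (l dp : ℕ) {f : Fin n → β} (hf : ∀ k : Fin n, dp ≤ (k : ℕ) → f k = 0) :
    ∑ k ∈ univ.filter (fun k : Fin n => ¬ (k : ℕ) < l), f k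
      = ∑ k ∈ univ.filter (fun k : Fin n => l ≤ (k : ℕ) ∧ (k : ℕ) < dp), f k := by
  refine (sum_subset (fun k hk => ?_) fun k hk hnk => ?_).symm
  · simp only [mem_filter, mem_univ, true_and] at hk ⊢
    omega
  · simp only [mem_filter, mem_univ, true_and] at hk hnk
    exact hf k (by omega)

section Rescale

variable {E : Type*} [NormedAddCommGroup E] [InnerProductSpace ℝ E] {c : ℝ} {w : E}

theorem smul_inv_smul_of_inner_self_eq_sq (hw : ⟪w, w⟫ = c ^ 2) : c • c⁻¹ • w = w := by
  rcases eq_or_ne c 0 with rfl | hc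
  · rw [zero_pow two_ne_zero, inner_self_eq_zero] at hw
    simp [hw]
  · rw [smul_inv_smul₀ hc]

theorem inner_inv_smul_smul_inv_smul_of_inner_self_eq_sq {x : E} {t : ℝ}
    (hx : ⟪x, w⟫ = c ^ 2 * t) (hw : ⟪w, w⟫ = c ^ 2) :
    ⟪x, c⁻¹ • w⟫ • c⁻¹ • w = t • w := by
  rcases eq_or_ne c 0 with rfl | hc
  · rw [zero_pow two_ne_zero, inner_self_eq_zero] at hw
    simp [hw]
  · rw [real_inner_smul_right, hx, smul_smul]
    congr 1
    field_simp

end Rescale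

section PODMode

variable {X : Type*} [NormedAddCommGroup X] [InnerProductSpace ℝ X] {M : ℕ} {u : Fin M → X}
  {K : Matrix (Fin M) (Fin M) ℝ} {v : Fin M → ℝ} {lam : ℝ}

variable (u v lam) in
noncomputable def podMode : X := (√M * √lam)⁻¹ • ∑ i, v i • u i

variable (hK : ∀ i j, K i j = (1 / (M : ℝ)) * ⟪u i, u j⟫) (heig : K *ᵥ v = lam • v)
include hK heig

theorem inner_sum_smul_eq_of_mulVec_eq (j : Fin M) :
    ⟪u j, ∑ i, v i • u i⟫ = M * lam * v j := by
  have hM : (M : ℝ) ≠ 0 := Nat.cast_ne_zero.mpr j.pos.ne'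
  have hgram : ∀ i, ⟪u j, u i⟫ = M * K j i := fun i => by
    rw [hK]
    field_simp
  calc ⟪u j, ∑ i, v i • u i⟫ = M * (K *ᵥ v) j := by
        simp_rw [inner_sum, real_inner_smul_right, hgram, Matrix.mulVec, dotProduct, mul_sum]
        exact sum_congr rfl fun i _ => by ring
    _ = M * lam * v j := by rw [heig, Pi.smul_apply, smul_eq_mul, mul_assoc]

variable (hv : ∑ j, v j * v j = 1)
include hv

theorem inner_self_sum_smul_eq_of_mulVec_eq :
    ⟪∑ i, v i • u i, ∑ i, v i • u i⟫ = M * lam := by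
  simp_rw [sum_inner (s := univ), real_inner_smul_left, inner_sum_smul_eq_of_mulVec_eq hK heig]
  calc ∑ i, v i * (M * lam * v i) = M * lam * ∑ j, v j * v j := by
        rw [mul_sum]
        exact sum_congr rfl fun i _ => by ring
    _ = M * lam := by rw [hv, mul_one]

variable (hlam : 0 ≤ lam)
include hlam

theorem sq_sqrt_mul_sqrt_eq_inner_self_sum_smul :
    (√M * √lam) ^ 2 = ⟪∑ i, v i • u i, ∑ i, v i • u i⟫ := by
  rw [inner_self_sum_smul_eq_of_mulVec_eq hK heig hv, mul_pow, Real.sq_sqrt M.cast_nonneg,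
    Real.sq_sqrt hlam]

theorem inner_podMode_smul_podMode (j : Fin M) :
    ⟪u j, podMode u v lam⟫ • podMode u v lam = v j • ∑ i, v i • u i := by
  have hsq := sq_sqrt_mul_sqrt_eq_inner_self_sum_smul hK heig hv hlam
  refine inner_inv_smul_smul_inv_smul_of_inner_self_eq_sq ?_ hsq.symm
  rw [hsq, inner_self_sum_smul_eq_of_mulVec_eq hK heig hv, inner_sum_smul_eq_of_mulVec_eq hK heig]

theorem norm_map_sum_smul_sq {Y : Type*} [NormedAddCommGroup Y] [InnerProductSpace ℝ Y]
    (G : X →ₗ[ℝ] Y) :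
    ‖G (∑ i, v i • u i)‖ ^ 2 = M * lam * ‖G (podMode u v lam)‖ ^ 2 := by
  have hsq := sq_sqrt_mul_sqrt_eq_inner_self_sum_smul hK heig hv hlam
  conv_lhs => rw [← smul_inv_smul_of_inner_self_eq_sq hsq.symm]
  rw [podMode, map_smul, norm_smul, mul_pow, Real.norm_eq_abs, sq_abs, hsq,
    inner_self_sum_smul_eq_of_mulVec_eq hK heig hv]

end PODMode

theorem pod_weighted_error_identity_general
    {X : Type*} [NormedAddCommGroup X] [InnerProductSpace ℝ X]
    (M : ℕ) (u : Fin M → X)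
    (K : Matrix (Fin M) (Fin M) ℝ)
    (hK : ∀ i j, K i j = (1 / (M : ℝ)) * ⟪u i, u j⟫)
    (v : Fin M → Fin M → ℝ)
    (hvON : ∀ k l, ∑ j, v k j * v l j = if k = l then (1 : ℝ) else 0)
    (lam : Fin M → ℝ)
    (heig : ∀ k, K.mulVec (v k) = lam k • v k)
    (hnonneg : ∀ k, 0 ≤ lam k)
    (dp : ℕ)
    (hzero : ∀ k : Fin M, dp ≤ (k : ℕ) → lam k = 0)
    (ψ : Fin M → X)
    (hψ : ∀ k : Fin M, ψ k =
      (Real.sqrt M * Real.sqrt (lam k))⁻¹ • ∑ j, v k j • u j)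
    {Y : Type*} [NormedAddCommGroup Y] [InnerProductSpace ℝ Y]
    (G : X →ₗ[ℝ] Y)
    (l : ℕ) :
    (1 / (M : ℝ)) * ∑ j, ‖G (u j) -
        ∑ k ∈ univ.filter (fun k : Fin M => (k : ℕ) < l), ⟪u j, ψ k⟫ • G (ψ k)‖ ^ 2
      = ∑ k ∈ univ.filter (fun k : Fin M => l ≤ (k : ℕ) ∧ (k : ℕ) < dp),
          lam k * ‖G (ψ k)‖ ^ 2 := by
  set w : Fin M → X := fun k => ∑ i, v k i • u i
  have hvv : ∀ k, ∑ j, v k j * v k j = 1 := fun k => by simpa using hvON k k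
  have hψ' : ∀ k, ψ k = podMode u (v k) (lam k) := hψ
  have hproj : ∀ j k, ⟪u j, ψ k⟫ • ψ k = v k j • w k := fun j k => by
    rw [hψ' k]
    exact inner_podMode_smul_podMode hK (heig k) (hvv k) (hnonneg k) j
  have hres : ∀ j, u j - ∑ k ∈ univ.filter (fun k : Fin M => (k : ℕ) < l), ⟪u j, ψ k⟫ • ψ k
      = ∑ k ∈ univ.filter (fun k : Fin M => ¬ (k : ℕ) < l), v k j • w k := fun j => by
    simp_rw [hproj, sub_eq_iff_eq_add', sum_filter_add_sum_filter_not]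
    exact (sum_smul_sum_smul_eq_self hvON u j).symm
  calc _ = (1 / (M : ℝ)) * ∑ k ∈ univ.filter (fun k : Fin M => ¬ (k : ℕ) < l),
        ‖G (w k)‖ ^ 2 := by
        simp_rw [← map_smul, ← map_sum, ← map_sub, hres, map_sum, map_smul,
          sum_norm_sq_sum_smul_eq_sum_norm_sq hvON]
    _ = ∑ k ∈ univ.filter (fun k : Fin M => ¬ (k : ℕ) < l), lam k * ‖G (ψ k)‖ ^ 2 := by
        rw [mul_sum]
        refine sum_congr rfl fun k _ => ?_
        have hM : (M : ℝ) ≠ 0 := Nat.cast_ne_zero.mpr k.pos.ne'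
        rw [norm_map_sum_smul_sq hK (heig k) (hvv k) (hnonneg k), ← hψ' k]
        field_simp
    _ = _ := sum_filter_not_lt_eq_sum_filter_of_eq_zero l dp fun k hk => by
        rw [hzero k hk, zero_mul]

/-- Weighted POD error identity:
`(1/M) Σ_j ‖G u_j − Σ_{k ≤ l} ⟪u_j, ψ_k⟫ G ψ_k‖² = Σ_{l < k ≤ dp} λ_k ‖G ψ_k‖²`. -/
theorem pod_weighted_error_identity
    {X : Type*} [NormedAddCommGroup X] [InnerProductSpace ℝ X]
    (M : ℕ) (hM : 1 ≤ M) (u : Fin M → X)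
    (K : Matrix (Fin M) (Fin M) ℝ)
    (hK : ∀ i j, K i j = (1 / (M : ℝ)) * ⟪u i, u j⟫)
    (v : Fin M → Fin M → ℝ)
    (hvON : ∀ k l, ∑ j, v k j * v l j = if k = l then (1 : ℝ) else 0)
    (lam : Fin M → ℝ)
    (heig : ∀ k, K.mulVec (v k) = lam k • v k)
    (hmono : ∀ k l : Fin M, k ≤ l → lam l ≤ lam k)
    (hnonneg : ∀ k, 0 ≤ lam k)
    (dp : ℕ) (hdpM : dp ≤ M)
    (hpos : ∀ k : Fin M, (k : ℕ) < dp → 0 < lam k)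
    (hzero : ∀ k : Fin M, dp ≤ (k : ℕ) → lam k = 0)
    (ψ : Fin M → X)
    (hψ : ∀ k : Fin M, ψ k =
      (Real.sqrt M * Real.sqrt (lam k))⁻¹ • ∑ j, v k j • u j)
    {Y : Type*} [NormedAddCommGroup Y] [InnerProductSpace ℝ Y]
    (G : X →ₗ[ℝ] Y)
    (l : ℕ) (hl : l ≤ dp) :
    (1 / (M : ℝ)) * ∑ j, ‖G (u j) -
        ∑ k ∈ univ.filter (fun k : Fin M => (k : ℕ) < l), ⟪u j, ψ k⟫ • G (ψ k)‖ ^ 2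
      = ∑ k ∈ univ.filter (fun k : Fin M => l ≤ (k : ℕ) ∧ (k : ℕ) < dp),
          lam k * ‖G (ψ k)‖ ^ 2 :=
  pod_weighted_error_identity_general M u K hK v hvON lam heig hnonneg dp hzero ψ hψ G l
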